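/- arXiv:2307.08320 — 3 statements merged into one kernel-verified Lean document; each statement's English description precedes it below -/
import Mathlib

section
/- Gödel's spacetime (ℝ⁴ with the Gödel metric) is homogeneous: for any two points m₁, m₂ ∈ ℝ⁴ there is a composition of the four basic isometries Θ₀^α, Θ₁^β, Θ₂^γ, Θ₃^δ mapping m₁ to m₂; specifically Θ₃^{δ} ∘ Θ₂^{γ} ∘ Θ₁^{β} ∘ Θ₀^{α} with α = x₀² - x₀¹, β = x₁² - x₁¹, γ = x₂² - x₂¹e^{-(x₁²-x₁¹)}, δ = x₃² - x₃¹ sends m₁ = (x₀¹,x₁¹,x₂¹,x₃¹) to m₂ = (x₀²,x₁²,x₂²,x₃²), and each factor is an isometry of the Gödel metric. -/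
open Real Matrix

/-- Gödel's metric on ℝ⁴, depending only on the coordinate `x 1`. -/
noncomputable def godelMetric (a : ℝ) (x : Fin 4 → ℝ) : Matrix (Fin 4) (Fin 4) ℝ :=
  a ^ 2 • !![1, 0, exp (x 1), 0;
             0, -1, 0, 0;
             exp (x 1), 0, exp (2 * x 1) / 2, 0;
             0, 0, 0, -1]

/-- Jacobian matrix of a map `ℝ⁴ → ℝ⁴`. -/
noncomputable def jacobian (Θ : (Fin 4 → ℝ) → (Fin 4 → ℝ)) (x : Fin 4 → ℝ) :
    Matrix (Fin 4) (Fin 4) ℝ :=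
  fun μ σ => fderiv ℝ Θ x (Pi.single σ 1) μ

/-- `Θ` is an isometry of the Gödel metric. -/
def IsGodelIsometry (a : ℝ) (Θ : (Fin 4 → ℝ) → (Fin 4 → ℝ)) : Prop :=
  ∀ x : Fin 4 → ℝ,
    (jacobian Θ x)ᵀ * godelMetric a (Θ x) * jacobian Θ x = godelMetric a x

noncomputable def Θ₀ (α : ℝ) (x : Fin 4 → ℝ) : Fin 4 → ℝ :=
  ![x 0 + α, x 1, x 2, x 3]

noncomputable def Θ₁ (β : ℝ) (x : Fin 4 → ℝ) : Fin 4 → ℝ :=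
  ![x 0, x 1 + β, x 2 * exp (-β), x 3]

noncomputable def Θ₂ (γ : ℝ) (x : Fin 4 → ℝ) : Fin 4 → ℝ :=
  ![x 0, x 1, x 2 + γ, x 3]

noncomputable def Θ₃ (δ : ℝ) (x : Fin 4 → ℝ) : Fin 4 → ℝ :=
  ![x 0, x 1, x 2, x 3 + δ]

/-! Every basic transformation is affine with a diagonal linear part, so its Jacobian is constant.
Since the metric depends on `x 1` only, `Θ₀`, `Θ₂`, `Θ₃` are isometries trivially; `Θ₁` shifts
`x 1` by `β`, and the factor `exp (-β)` it puts on `x 2` exactly compensates the resulting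
factors `exp β` and `exp (2β)` in the metric. Homogeneity is then a direct computation. -/

lemma jacobian_mulVec_add (A : Matrix (Fin 4) (Fin 4) ℝ) (v x : Fin 4 → ℝ) :
    jacobian (fun y => A *ᵥ y + v) x = A := by
  have hderiv : fderiv ℝ (fun y => A *ᵥ y + v) x =
      LinearMap.toContinuousLinearMap (Matrix.mulVecLin A) :=
    ((LinearMap.toContinuousLinearMap (Matrix.mulVecLin A)).hasFDerivAt.add_const v).fderiv
  ext μ σ
  simp [jacobian, hderiv]

lemma godelMetric_congr (a : ℝ) {x y : Fin 4 → ℝ} (h : x 1 = y 1) :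
    godelMetric a x = godelMetric a y := by
  rw [godelMetric, godelMetric, h]

lemma isGodelIsometry_of_jacobian_eq_one (a : ℝ) {Θ : (Fin 4 → ℝ) → (Fin 4 → ℝ)}
    (hJ : ∀ x, jacobian Θ x = 1) (h1 : ∀ x, Θ x 1 = x 1) : IsGodelIsometry a Θ := by
  intro x
  rw [hJ, transpose_one, one_mul, mul_one, godelMetric_congr a (h1 x)]

lemma Θ₀_eq (α : ℝ) : Θ₀ α = fun y => (1 : Matrix (Fin 4) (Fin 4) ℝ) *ᵥ y + ![α, 0, 0, 0] := by
  funext y i; fin_cases i <;> simp [Θ₀]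

lemma Θ₁_eq (β : ℝ) :
    Θ₁ β = fun y => diagonal ![1, 1, exp (-β), 1] *ᵥ y + ![0, β, 0, 0] := by
  funext y i; fin_cases i <;> simp [Θ₁, mulVec_diagonal, mul_comm]

lemma Θ₂_eq (γ : ℝ) : Θ₂ γ = fun y => (1 : Matrix (Fin 4) (Fin 4) ℝ) *ᵥ y + ![0, 0, γ, 0] := by
  funext y i; fin_cases i <;> simp [Θ₂]

lemma Θ₃_eq (δ : ℝ) : Θ₃ δ = fun y => (1 : Matrix (Fin 4) (Fin 4) ℝ) *ᵥ y + ![0, 0, 0, δ] := by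
  funext y i; fin_cases i <;> simp [Θ₃]

lemma isGodelIsometry_Θ₀ (a α : ℝ) : IsGodelIsometry a (Θ₀ α) :=
  isGodelIsometry_of_jacobian_eq_one a (fun x => by rw [Θ₀_eq]; exact jacobian_mulVec_add _ _ x)
    (fun x => by simp [Θ₀])

lemma isGodelIsometry_Θ₂ (a γ : ℝ) : IsGodelIsometry a (Θ₂ γ) :=
  isGodelIsometry_of_jacobian_eq_one a (fun x => by rw [Θ₂_eq]; exact jacobian_mulVec_add _ _ x)
    (fun x => by simp [Θ₂])

lemma isGodelIsometry_Θ₃ (a δ : ℝ) : IsGodelIsometry a (Θ₃ δ) :=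
  isGodelIsometry_of_jacobian_eq_one a (fun x => by rw [Θ₃_eq]; exact jacobian_mulVec_add _ _ x)
    (fun x => by simp [Θ₃])

lemma isGodelIsometry_Θ₁ (a β : ℝ) : IsGodelIsometry a (Θ₁ β) := by
  intro x
  have hJ : jacobian (Θ₁ β) x = diagonal ![1, 1, exp (-β), 1] := by
    rw [Θ₁_eq]; exact jacobian_mulVec_add _ _ x
  have hshift : Θ₁ β x 1 = x 1 + β := by simp [Θ₁]
  rw [hJ, diagonal_transpose, godelMetric, godelMetric, hshift]
  ext i j
  rw [mul_diagonal, diagonal_mul]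
  fin_cases i <;> fin_cases j <;> simp [two_mul, exp_add, exp_neg] <;> field_simp

theorem godel_homogeneous_general (a : ℝ) (m₁ m₂ : Fin 4 → ℝ) :
    let α := m₂ 0 - m₁ 0
    let β := m₂ 1 - m₁ 1
    let γ := m₂ 2 - m₁ 2 * exp (-(m₂ 1 - m₁ 1))
    let δ := m₂ 3 - m₁ 3
    (Θ₃ δ ∘ Θ₂ γ ∘ Θ₁ β ∘ Θ₀ α) m₁ = m₂ ∧
    IsGodelIsometry a (Θ₀ α) ∧ IsGodelIsometry a (Θ₁ β) ∧
    IsGodelIsometry a (Θ₂ γ) ∧ IsGodelIsometry a (Θ₃ δ) := by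
  intro α β γ δ
  refine ⟨?_, isGodelIsometry_Θ₀ a α, isGodelIsometry_Θ₁ a β, isGodelIsometry_Θ₂ a γ,
    isGodelIsometry_Θ₃ a δ⟩
  funext i
  fin_cases i <;> simp [Θ₀, Θ₁, Θ₂, Θ₃, α, β, γ, δ]

/-- Gödel's spacetime is homogeneous: an explicit composition of the four
basic isometries maps any point `m₁` to any point `m₂`. -/
theorem godel_homogeneous (a : ℝ) (ha : 0 < a) (m₁ m₂ : Fin 4 → ℝ) :
    let α := m₂ 0 - m₁ 0
    let β := m₂ 1 - m₁ 1
    let γ := m₂ 2 - m₁ 2 * exp (-(m₂ 1 - m₁ 1))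
    let δ := m₂ 3 - m₁ 3
    (Θ₃ δ ∘ Θ₂ γ ∘ Θ₁ β ∘ Θ₀ α) m₁ = m₂ ∧
    IsGodelIsometry a (Θ₀ α) ∧ IsGodelIsometry a (Θ₁ β) ∧
    IsGodelIsometry a (Θ₂ γ) ∧ IsGodelIsometry a (Θ₃ δ) :=
  godel_homogeneous_general a m₁ m₂
end

section
/- If u⁰, u¹, u², u³ are differentiable functions of s solving the Gödel geodesic system du⁰/ds + 2u⁰u¹ + e^{x₁}u¹u² = 0, du¹/ds + e^{x₁}u⁰u² + (e^{2x₁}/2)(u²)² = 0, du²/ds - 2e^{-x₁}u¹u⁰ = 0, du³/ds = 0 (where dx₁/ds = u¹), then the quantity (u¹)² + (e^{2x₁}/2)(u²)² is constant along the solution. -/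
open Real

lemma hasDerivAt_sq_add_exp_two_mul_div_two_mul_sq {x v w : ℝ → ℝ} {x' v' w' s : ℝ}
    (hx : HasDerivAt x x' s) (hv : HasDerivAt v v' s) (hw : HasDerivAt w w' s) :
    HasDerivAt (fun s => v s ^ 2 + exp (2 * x s) / 2 * w s ^ 2)
      (2 * v s * v' + (exp (2 * x s) * (2 * x') / 2 * w s ^ 2
        + exp (2 * x s) / 2 * (2 * w s * w'))) s := by
  have hv2 := hv.pow 2
  have hw2 := hw.pow 2
  have hexp := ((hx.const_mul 2).exp.div_const 2).mul hw2
  simp only [Nat.cast_ofNat, Nat.add_one_sub_one, pow_one] at hv2 hw2 hexp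
  exact hv2.add hexp

/-- `dB/ds` along the geodesic system: the `u²`-terms cancel outright, the `u⁰u¹u²`-terms because
`e^{2x} e^{-x} = e^x`. -/
lemma godel_B_deriv_along_geodesic_eq_zero (x u0 u1 u2 : ℝ) :
    2 * u1 * (-(exp x * u0 * u2 + exp (2 * x) / 2 * u2 ^ 2))
      + (exp (2 * x) * (2 * u1) / 2 * u2 ^ 2
        + exp (2 * x) / 2 * (2 * u2 * (2 * exp (-x) * u1 * u0))) = 0 := by
  have hcancel : exp (2 * x) * exp (-x) = exp x := by
    rw [← exp_add]; ring_nf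
  linear_combination (2 * u0 * u1 * u2) * hcancel

theorem godel_geodesic_first_integral_B_general
    (x₁ u0 u1 u2 : ℝ → ℝ)
    (hx₁ : ∀ s, HasDerivAt x₁ (u1 s) s)
    (h1 : ∀ s, HasDerivAt u1
      (-(exp (x₁ s) * u0 s * u2 s + exp (2 * x₁ s) / 2 * (u2 s) ^ 2)) s)
    (h2 : ∀ s, HasDerivAt u2 (2 * exp (-(x₁ s)) * u1 s * u0 s) s) :
    ∀ s t : ℝ,
      (u1 s) ^ 2 + exp (2 * x₁ s) / 2 * (u2 s) ^ 2
        = (u1 t) ^ 2 + exp (2 * x₁ t) / 2 * (u2 t) ^ 2 := by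
  have hB : ∀ s, HasDerivAt (fun s => u1 s ^ 2 + exp (2 * x₁ s) / 2 * u2 s ^ 2) 0 s := fun s => by
    simpa only [godel_B_deriv_along_geodesic_eq_zero] using
      hasDerivAt_sq_add_exp_two_mul_div_two_mul_sq (hx₁ s) (h1 s) (h2 s)
  exact is_const_of_deriv_eq_zero (fun s => (hB s).differentiableAt) (fun s => (hB s).deriv)

/-- Along solutions of the Gödel geodesic system (with `a = 1`),
`B² := (u1)² + (e^{2x₁}/2)(u2)²` is a first integral: it is constant. -/
theorem godel_geodesic_first_integral_B
    (x₁ u0 u1 u2 u3 : ℝ → ℝ)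
    (hx₁ : ∀ s, HasDerivAt x₁ (u1 s) s)
    (h0 : ∀ s, HasDerivAt u0 (-(2 * u0 s * u1 s + exp (x₁ s) * u1 s * u2 s)) s)
    (h1 : ∀ s, HasDerivAt u1
      (-(exp (x₁ s) * u0 s * u2 s + exp (2 * x₁ s) / 2 * (u2 s) ^ 2)) s)
    (h2 : ∀ s, HasDerivAt u2 (2 * exp (-(x₁ s)) * u1 s * u0 s) s)
    (h3 : ∀ s, HasDerivAt u3 (0 : ℝ) s) :
    ∀ s t : ℝ,
      (u1 s) ^ 2 + exp (2 * x₁ s) / 2 * (u2 s) ^ 2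
        = (u1 t) ^ 2 + exp (2 * x₁ t) / 2 * (u2 t) ^ 2 :=
  godel_geodesic_first_integral_B_general x₁ u0 u1 u2 hx₁ h1 h2
end

section
/- If α satisfies (√2-1)² ≤ α ≤ (√2+1)², then (1/2)(1/√α + √α) ≤ √2, with equality iff α = (√2±1)². Consequently, for fixed-radius geodesics in Gödel's universe with cosh(2r) = (1/2)(1/√α + √α), the radius satisfies 1 ≤ cosh(2r) ≤ √2, i.e., 0 ≤ r ≤ (1/2)·arccosh(√2). -/
open Real

/-!
Put `s = √α`, `a = √2 - 1` and `b = √2 + 1`, so that `a * b = 1` and `a + b = 2√2`.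
Then `1/s + s - (a + b) = (s - a)(s - b)/s`, which is `≤ 0` exactly for `a ≤ s ≤ b`
and vanishes exactly at `s = a` and `s = b`. The radius bound follows because `arcosh`
is monotone and inverts `cosh` on `[0, ∞)`.
-/

/-- Inverse hyperbolic cosine on `[1, ∞)`. -/
noncomputable def arcosh (x : ℝ) : ℝ := Real.log (x + Real.sqrt (x ^ 2 - 1))

theorem arcosh_eq_real_arcosh : _root_.arcosh = Real.arcosh := rfl

theorem le_arcosh_of_cosh_le {x y : ℝ} (hx : 0 ≤ x) (h : cosh x ≤ y) : x ≤ Real.arcosh y :=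
  calc x = Real.arcosh (cosh x) := (arcosh_cosh hx).symm
    _ ≤ Real.arcosh y := (arcosh_le_arcosh (cosh_pos x) ((cosh_pos x).trans_le h)).2 h

section Reciprocal

variable {a b s : ℝ}

theorem one_div_add_self_sub_eq (hab : a * b = 1) (hs : 0 < s) :
    1 / s + s - (a + b) = (s - a) * (s - b) / s := by
  field_simp
  linear_combination -hab

theorem one_div_add_self_le_add_iff (hab : a * b = 1) (hs : 0 < s) :
    1 / s + s ≤ a + b ↔ (s - a) * (s - b) ≤ 0 := by
  rw [← sub_nonpos, one_div_add_self_sub_eq hab hs, div_le_iff₀ hs, zero_mul]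

theorem one_div_add_self_eq_add_iff (hab : a * b = 1) (hs : 0 < s) :
    1 / s + s = a + b ↔ s = a ∨ s = b := by
  rw [← sub_eq_zero, one_div_add_self_sub_eq hab hs, div_eq_zero_iff, mul_eq_zero,
    sub_eq_zero, sub_eq_zero, or_iff_left hs.ne']

end Reciprocal

theorem sqrt_two_sub_one_mul_sqrt_two_add_one : (√2 - 1) * (√2 + 1) = 1 := by
  linear_combination sq_sqrt (zero_le_two : (0 : ℝ) ≤ 2)

theorem sqrt_two_sub_one_pos : 0 < √2 - 1 :=
  sub_pos.2 one_lt_sqrt_two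

/-- If `(√2-1)² ≤ α ≤ (√2+1)²` then `(1/2)(1/√α + √α) ≤ √2`, with equality
iff `α = (√2-1)²` or `α = (√2+1)²`. Consequently fixed-radius geodesics in
Gödel's universe, where `cosh(2r) = (1/2)(1/√α + √α)` with `r ≥ 0`, satisfy
`1 ≤ cosh(2r) ≤ √2`, i.e. `0 ≤ r ≤ (1/2)·arccosh(√2)`. -/
theorem godel_fixed_radius_range (α : ℝ)
    (h₁ : (Real.sqrt 2 - 1) ^ 2 ≤ α) (h₂ : α ≤ (Real.sqrt 2 + 1) ^ 2) :
    (1 / 2) * (1 / Real.sqrt α + Real.sqrt α) ≤ Real.sqrt 2 ∧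
    ((1 / 2) * (1 / Real.sqrt α + Real.sqrt α) = Real.sqrt 2 ↔
      α = (Real.sqrt 2 - 1) ^ 2 ∨ α = (Real.sqrt 2 + 1) ^ 2) ∧
    (∀ r : ℝ, 0 ≤ r →
      Real.cosh (2 * r) = (1 / 2) * (1 / Real.sqrt α + Real.sqrt α) →
      (1 ≤ Real.cosh (2 * r) ∧ Real.cosh (2 * r) ≤ Real.sqrt 2 ∧
        0 ≤ r ∧ r ≤ (1 / 2) * _root_.arcosh (Real.sqrt 2))) := by
  have hab := sqrt_two_sub_one_mul_sqrt_two_add_one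
  have ha := sqrt_two_sub_one_pos
  have hα : 0 < α := (pow_pos ha 2).trans_le h₁
  have hs : 0 < √α := sqrt_pos.2 hα
  have hlo : √2 - 1 ≤ √α := (le_sqrt ha.le hα.le).2 h₁
  have hhi : √α ≤ √2 + 1 := (sqrt_le_left (by positivity)).2 h₂
  have hle : (1 / 2) * (1 / √α + √α) ≤ √2 := by
    have := (one_div_add_self_le_add_iff hab hs).2
      (mul_nonpos_of_nonneg_of_nonpos (sub_nonneg.2 hlo) (sub_nonpos.2 hhi))
    linarith
  refine ⟨hle, ?_, fun r hr hcosh => ⟨one_le_cosh _, hcosh ▸ hle, hr, ?_⟩⟩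
  · rw [← sqrt_eq_iff_eq_sq hα.le ha.le, ← sqrt_eq_iff_eq_sq hα.le (by positivity),
      ← one_div_add_self_eq_add_iff hab hs]
    constructor <;> intro h <;> linarith
  · have := le_arcosh_of_cosh_le (by positivity) (hcosh ▸ hle)
    rw [arcosh_eq_real_arcosh]
    linarith
end
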